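/- Let (A, C, ψ) be an entwining structure and e ∈ C a group-like element, and suppose the map can_ψ : A ⊗_B A → A ⊗ C, a ⊗ a' ↦ a·ψ(e ⊗ a'), is bijective, where B = {b ∈ A | ψ(e ⊗ b) = b ⊗ e}. Then Δ_A : A → A ⊗ C, a ↦ ψ(e ⊗ a), is a right C-comodule structure on A with Δ_A(1) = 1 ⊗ e, the coinvariants {b ∈ A | Δ_A(ba) = bΔ_A(a) ∀a} equal B, and B ⊆ A is a C-Galois extension whose canonical entwining map is ψ. Moreover Δ_A is the unique coaction with these properties. -/

import Mathlib

open TensorProduct LinearMap Coalgebra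

variable {k A C : Type*} [Field k] [Ring A] [Algebra k A]
  [AddCommGroup C] [Module k C] [Coalgebra k C]

/-- The four axioms of an entwining structure `(A, C, ψ)`. -/
def IsEntwining (ψ : C ⊗[k] A →ₗ[k] A ⊗[k] C) : Prop :=
  (ψ ∘ₗ (LinearMap.mul' k A).lTensor C ∘ₗ (TensorProduct.assoc k C A A).toLinearMap
      = (LinearMap.mul' k A).rTensor C ∘ₗ (TensorProduct.assoc k A A C).symm.toLinearMap
        ∘ₗ ψ.lTensor A ∘ₗ (TensorProduct.assoc k A C A).toLinearMap ∘ₗ ψ.rTensor A)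
  ∧ (∀ c : C, ψ (c ⊗ₜ[k] (1 : A)) = (1 : A) ⊗ₜ[k] c)
  ∧ ((comul (R := k) (A := C)).lTensor A ∘ₗ ψ
      = (TensorProduct.assoc k A C C).toLinearMap ∘ₗ ψ.rTensor C
        ∘ₗ (TensorProduct.assoc k C A C).symm.toLinearMap ∘ₗ ψ.lTensor C
        ∘ₗ (TensorProduct.assoc k C C A).toLinearMap ∘ₗ (comul (R := k) (A := C)).rTensor A)
  ∧ ((TensorProduct.rid k A).toLinearMap ∘ₗ (counit (R := k) (A := C)).lTensor A ∘ₗ ψ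
      = (TensorProduct.lid k A).toLinearMap ∘ₗ (counit (R := k) (A := C)).rTensor A)

/-- `ρ : A → A ⊗ C` is a (counital, coassociative) right `C`-comodule structure. -/
def IsComodule (ρ : A →ₗ[k] A ⊗[k] C) : Prop :=
  ((comul (R := k) (A := C)).lTensor A ∘ₗ ρ
      = (TensorProduct.assoc k A C C).toLinearMap ∘ₗ ρ.rTensor C ∘ₗ ρ)
  ∧ ((TensorProduct.rid k A).toLinearMap
      ∘ₗ (counit (R := k) (A := C)).lTensor A ∘ₗ ρ = LinearMap.id)

/-- The coinvariants `B = A^{co C}` of a coaction `ρ`. -/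
def coinvSet (ρ : A →ₗ[k] A ⊗[k] C) : Set A :=
  {b : A | ∀ a : A, ρ (b * a) = (LinearMap.mulLeft k b).rTensor C (ρ a)}

/-- The canonical map `A ⊗ A → A ⊗ C`, `a ⊗ a' ↦ a · ρ a'`, whose factorisation
through `A ⊗_B A` is the canonical Galois map `can`. -/
noncomputable def canF (ρ : A →ₗ[k] A ⊗[k] C) : A ⊗[k] A →ₗ[k] A ⊗[k] C :=
  (LinearMap.mul' k A).rTensor C ∘ₗ (TensorProduct.assoc k A A C).symm.toLinearMap
    ∘ₗ ρ.lTensor A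

/-- The kernel of `A ⊗ A ↠ A ⊗_B A`: the subspace spanned by
`a b ⊗ a' - a ⊗ b a'` for `b ∈ B = A^{co C}`. -/
noncomputable def relJ (ρ : A →ₗ[k] A ⊗[k] C) : Submodule k (A ⊗[k] A) :=
  Submodule.span k {x : A ⊗[k] A | ∃ (a a' b : A), b ∈ coinvSet ρ
    ∧ x = (a * b) ⊗ₜ[k] a' - a ⊗ₜ[k] (b * a')}

/-- `B ⊆ A` is a `C`-Galois extension: the canonical map
`can : A ⊗_B A → A ⊗ C` is bijective; equivalently, `canF ρ` is surjective
with kernel exactly `relJ ρ`. -/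
def IsCGalois (ρ : A →ₗ[k] A ⊗[k] C) : Prop :=
  Function.Surjective (canF ρ) ∧ LinearMap.ker (canF ρ) = relJ ρ

/-- A (linear) lift of the translation map `τ = can⁻¹(1 ⊗ -) : C → A ⊗_B A`
to `A ⊗ A`. -/
def IsTranslationLift (ρ : A →ₗ[k] A ⊗[k] C) (τ : C →ₗ[k] A ⊗[k] A) : Prop :=
  ∀ c : C, canF ρ (τ c) = (1 : A) ⊗ₜ[k] c

/-- The canonical entwining map `ψ = can ∘ (A ⊗_B m) ∘ (τ ⊗ A)` associated to a
`C`-Galois extension, expressed through a lift `τ` of the translation map: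
`ψ (c ⊗ a) = c⁽¹⁾ ((c⁽²⁾ a)₍₀₎) ⊗ (c⁽²⁾ a)₍₁₎`. -/
noncomputable def canPsi (ρ : A →ₗ[k] A ⊗[k] C) (τ : C →ₗ[k] A ⊗[k] A) :
    C ⊗[k] A →ₗ[k] A ⊗[k] C :=
  canF ρ ∘ₗ (LinearMap.mul' k A).lTensor A
    ∘ₗ (TensorProduct.assoc k A A A).toLinearMap ∘ₗ τ.rTensor A

/-- The right `A`-action `(m ⊗ C) ∘ (A ⊗ ψ)` on `A ⊗ C` induced by an entwining map. -/
noncomputable def actPsi (ψ : C ⊗[k] A →ₗ[k] A ⊗[k] C) :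
    (A ⊗[k] C) ⊗[k] A →ₗ[k] A ⊗[k] C :=
  (LinearMap.mul' k A).rTensor C ∘ₗ (TensorProduct.assoc k A A C).symm.toLinearMap
    ∘ₗ ψ.lTensor A ∘ₗ (TensorProduct.assoc k A C A).toLinearMap

/-!
Every clause is an entwining axiom evaluated at `e ⊗ -`. Compatibility of `ψ` with the
multiplication makes `ρ = ψ(e ⊗ -)` right `A`-linear for the action `actPsi ψ`; this identifies
the coinvariants, makes `canF ρ` right `A`-linear (whence `canPsi ρ τ (c ⊗ a) = ψ(c ⊗ a)` from
`canF ρ (τ c) = 1 ⊗ c`), and forces any such `ρ'` with `ρ' 1 = 1 ⊗ e` to be `ρ`. Compatibility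
with the comultiplication and counit, at the group-like `e`, gives the comodule axioms.
-/

section TensorLemmas

variable {k A C : Type*} [CommSemiring k] [Semiring A] [Algebra k A]
  [AddCommMonoid C] [Module k C]

lemma rTensor_mul'_assoc_symm_tmul (x : A) (w : A ⊗[k] C) :
    (LinearMap.mul' k A).rTensor C ((TensorProduct.assoc k A A C).symm (x ⊗ₜ[k] w))
      = (LinearMap.mulLeft k x).rTensor C w := by
  induction w using TensorProduct.induction_on with
  | zero => simp
  | tmul a c => simp
  | add u v hu hv => simp only [tmul_add, map_add, hu, hv]

lemma rTensor_mulLeft_rTensor_mulLeft (x y : A) (w : A ⊗[k] C) :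
    (LinearMap.mulLeft k x).rTensor C ((LinearMap.mulLeft k y).rTensor C w)
      = (LinearMap.mulLeft k (x * y)).rTensor C w := by
  rw [LinearMap.mulLeft_mul, LinearMap.rTensor_comp_apply]

lemma rTensor_mulLeft_one (w : A ⊗[k] C) : (LinearMap.mulLeft k (1 : A)).rTensor C w = w := by
  rw [LinearMap.mulLeft_one, LinearMap.rTensor_id, LinearMap.id_apply]

end TensorLemmas

section ActionLemmas

variable {k A C : Type*} [Field k] [Ring A] [Algebra k A] [AddCommGroup C] [Module k C]

lemma canF_tmul (ρ : A →ₗ[k] A ⊗[k] C) (x y : A) :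
    canF ρ (x ⊗ₜ[k] y) = (LinearMap.mulLeft k x).rTensor C (ρ y) :=
  rTensor_mul'_assoc_symm_tmul x (ρ y)

lemma actPsi_tmul (ψ : C ⊗[k] A →ₗ[k] A ⊗[k] C) (x : A) (c : C) (a : A) :
    actPsi ψ ((x ⊗ₜ[k] c) ⊗ₜ[k] a) = (LinearMap.mulLeft k x).rTensor C (ψ (c ⊗ₜ[k] a)) :=
  rTensor_mul'_assoc_symm_tmul x (ψ (c ⊗ₜ[k] a))

lemma actPsi_one_tmul (ψ : C ⊗[k] A →ₗ[k] A ⊗[k] C) (c : C) (a : A) :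
    actPsi ψ (((1 : A) ⊗ₜ[k] c) ⊗ₜ[k] a) = ψ (c ⊗ₜ[k] a) := by
  rw [actPsi_tmul, rTensor_mulLeft_one]

lemma rTensor_mulLeft_actPsi (ψ : C ⊗[k] A →ₗ[k] A ⊗[k] C) (x a : A) (w : A ⊗[k] C) :
    (LinearMap.mulLeft k x).rTensor C (actPsi ψ (w ⊗ₜ[k] a))
      = actPsi ψ ((LinearMap.mulLeft k x).rTensor C w ⊗ₜ[k] a) := by
  induction w using TensorProduct.induction_on with
  | zero => simp only [zero_tmul, map_zero]
  | tmul y c =>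
    rw [actPsi_tmul, rTensor_mulLeft_rTensor_mulLeft, LinearMap.rTensor_tmul,
      LinearMap.mulLeft_apply, actPsi_tmul]
  | add u v hu hv => simp only [map_add, add_tmul, hu, hv]

lemma canF_mul'_lTensor_assoc_tmul {ψ : C ⊗[k] A →ₗ[k] A ⊗[k] C} {ρ : A →ₗ[k] A ⊗[k] C}
    (hρ : ∀ x y : A, ρ (x * y) = actPsi ψ (ρ x ⊗ₜ[k] y)) (w : A ⊗[k] A) (a : A) :
    canF ρ ((LinearMap.mul' k A).lTensor A (TensorProduct.assoc k A A A (w ⊗ₜ[k] a)))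
      = actPsi ψ (canF ρ w ⊗ₜ[k] a) := by
  induction w using TensorProduct.induction_on with
  | zero => simp only [zero_tmul, map_zero]
  | tmul x y =>
    rw [TensorProduct.assoc_tmul, LinearMap.lTensor_tmul, LinearMap.mul'_apply, canF_tmul,
      canF_tmul, hρ, rTensor_mulLeft_actPsi]
  | add u v hu hv => simp only [add_tmul, map_add, hu, hv]

lemma canPsi_eq_of_isTranslationLift {ψ : C ⊗[k] A →ₗ[k] A ⊗[k] C} {ρ : A →ₗ[k] A ⊗[k] C}
    (hρ : ∀ x y : A, ρ (x * y) = actPsi ψ (ρ x ⊗ₜ[k] y)) {τ : C →ₗ[k] A ⊗[k] A}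
    (hτ : IsTranslationLift ρ τ) : canPsi ρ τ = ψ := by
  refine TensorProduct.ext' fun c a => ?_
  calc canPsi ρ τ (c ⊗ₜ[k] a)
      = canF ρ ((LinearMap.mul' k A).lTensor A (TensorProduct.assoc k A A A (τ c ⊗ₜ[k] a))) :=
        rfl
    _ = ψ (c ⊗ₜ[k] a) := by rw [canF_mul'_lTensor_assoc_tmul hρ, hτ c, actPsi_one_tmul]

lemma eq_comp_mk_of_map_one {ψ : C ⊗[k] A →ₗ[k] A ⊗[k] C} {ρ : A →ₗ[k] A ⊗[k] C} {e : C}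
    (h₁ : ρ 1 = (1 : A) ⊗ₜ[k] e)
    (hmul : ρ ∘ₗ LinearMap.mul' k A = actPsi ψ ∘ₗ ρ.rTensor A) :
    ρ = ψ ∘ₗ TensorProduct.mk k C A e := by
  ext a
  simpa [h₁, actPsi_one_tmul] using LinearMap.congr_fun hmul ((1 : A) ⊗ₜ[k] a)

end ActionLemmas

namespace IsEntwining

variable {ψ : C ⊗[k] A →ₗ[k] A ⊗[k] C}

lemma map_tmul_mul (hψ : IsEntwining ψ) (c : C) (x y : A) :
    ψ (c ⊗ₜ[k] (x * y)) = actPsi ψ (ψ (c ⊗ₜ[k] x) ⊗ₜ[k] y) := by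
  simpa [actPsi] using LinearMap.congr_fun hψ.1 ((c ⊗ₜ[k] x) ⊗ₜ[k] y)

lemma coinvSet_comp_mk (hψ : IsEntwining ψ) (e : C) :
    coinvSet (ψ ∘ₗ TensorProduct.mk k C A e) = {b : A | ψ (e ⊗ₜ[k] b) = b ⊗ₜ[k] e} := by
  ext b
  constructor
  · intro hb
    simpa [hψ.2.1 e] using hb 1
  · intro hb a
    change ψ (e ⊗ₜ[k] (b * a)) = _
    rw [hψ.map_tmul_mul, hb, actPsi_tmul]
    rfl

lemma isComodule_comp_mk (hψ : IsEntwining ψ) {e : C}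
    (he₁ : comul (R := k) e = e ⊗ₜ[k] e) (he₂ : counit (R := k) e = 1) :
    IsComodule (ψ ∘ₗ TensorProduct.mk k C A e) := by
  set ρ := ψ ∘ₗ TensorProduct.mk k C A e
  have hρ : ∀ w : A ⊗[k] C, ψ.rTensor C ((TensorProduct.assoc k C A C).symm (e ⊗ₜ[k] w))
      = ρ.rTensor C w := by
    intro w
    induction w using TensorProduct.induction_on with
    | zero => simp
    | tmul a c => simp [ρ]
    | add u v hu hv => simp only [tmul_add, map_add, hu, hv]
  constructor
  · ext a
    have h := LinearMap.congr_fun hψ.2.2.1 (e ⊗ₜ[k] a)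
    simp only [coe_comp, LinearEquiv.coe_coe, Function.comp_apply, rTensor_tmul, he₁,
      TensorProduct.assoc_tmul, lTensor_tmul, hρ] at h
    exact h
  · ext a
    have h := LinearMap.congr_fun hψ.2.2.2 (e ⊗ₜ[k] a)
    simp only [coe_comp, LinearEquiv.coe_coe, Function.comp_apply, rTensor_tmul, he₂,
      TensorProduct.lid_tmul, one_smul] at h
    exact h

end IsEntwining

/-- Proposition 4.2, (1) ⇒ (2): if `(A,C,ψ)` is an entwining
structure, `e ∈ C` is group-like, `B = {b | ψ(e ⊗ b) = b ⊗ e}` and the map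
`can_ψ : A ⊗_B A → A ⊗ C`, `a ⊗ a' ↦ a ψ(e ⊗ a')`, is bijective, then
`Δ_A := ψ(e ⊗ -)` is a right `C`-comodule structure on `A` with `Δ_A 1 = 1 ⊗ e`,
its coinvariants are exactly `B`, `B ⊆ A` is a `C`-Galois extension whose
canonical entwining map is `ψ`, and `Δ_A` is the unique such coaction. -/
theorem psi_principal_bundle_gives_galois
    (ψ : C ⊗[k] A →ₗ[k] A ⊗[k] C) (hψ : IsEntwining ψ)
    (e : C) (he₁ : comul (R := k) e = e ⊗ₜ[k] e) (he₂ : counit (R := k) e = 1)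
    (hsurj : Function.Surjective (canF (ψ ∘ₗ TensorProduct.mk k C A e)))
    (hker : LinearMap.ker (canF (ψ ∘ₗ TensorProduct.mk k C A e))
      = Submodule.span k {x : A ⊗[k] A | ∃ (a a' b : A),
          ψ (e ⊗ₜ[k] b) = b ⊗ₜ[k] e ∧ x = (a * b) ⊗ₜ[k] a' - a ⊗ₜ[k] (b * a')}) :
    letI ρ : A →ₗ[k] A ⊗[k] C := ψ ∘ₗ TensorProduct.mk k C A e
    IsComodule ρ
    ∧ ρ 1 = (1 : A) ⊗ₜ[k] e
    ∧ coinvSet ρ = {b : A | ψ (e ⊗ₜ[k] b) = b ⊗ₜ[k] e}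
    ∧ IsCGalois ρ
    ∧ (∀ τ : C →ₗ[k] A ⊗[k] A, IsTranslationLift ρ τ → canPsi ρ τ = ψ)
    ∧ (∀ ρ' : A →ₗ[k] A ⊗[k] C, IsComodule ρ' → ρ' 1 = (1 : A) ⊗ₜ[k] e →
        ρ' ∘ₗ LinearMap.mul' k A = actPsi ψ ∘ₗ ρ'.rTensor A → ρ' = ρ) := by
  have hcoinv := hψ.coinvSet_comp_mk e
  refine ⟨hψ.isComodule_comp_mk he₁ he₂, hψ.2.1 e, hcoinv, ⟨hsurj, ?_⟩,
    fun τ hτ => canPsi_eq_of_isTranslationLift (hψ.map_tmul_mul e) hτ,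
    fun ρ' _ h₁ hmul => eq_comp_mk_of_map_one h₁ hmul⟩
  rw [hker, relJ, hcoinv]
  rfl
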